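/- arXiv:1812.11466 — 7 statements merged into one kernel-verified Lean document; each statement's English description precedes it below -/
import Mathlib

section
/- For any k with 2 ≤ k ≤ (n+1)/2 and p ∈ [0,1], we have C(n,k) · k^{k−2} · p^{k−1} · e^{−pk(n−k)} ≤ (1/k²) · exp(−(k(n−1)/2)(p − (2 log n + 2)/(n−1))). -/
/-- For `2 ≤ k ≤ (n+1)/2` and `p ∈ [0,1]`,
`C(n,k) k^{k−2} p^{k−1} e^{−pk(n−k)} ≤ (1/k²) exp(−(k(n−1)/2)(p − (2 log n + 2)/(n−1)))`. -/
theorem stmt_3 (n k : ℕ) (hn : 2 ≤ n) (hk : 2 ≤ k) (hk2 : 2 * k ≤ n + 1)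
    (p : ℝ) (hp0 : 0 ≤ p) (hp1 : p ≤ 1) :
    (n.choose k : ℝ) * (k : ℝ) ^ (k - 2) * p ^ (k - 1) *
        Real.exp (-(p * k * ((n : ℝ) - k)))
      ≤ (1 / (k : ℝ) ^ 2) *
        Real.exp (-((k : ℝ) * ((n : ℝ) - 1) / 2) *
          (p - (2 * Real.log n + 2) / ((n : ℝ) - 1))) := by
  have hK2 : (2:ℝ) ≤ (k:ℝ) := by exact_mod_cast hk
  have hN2 : (2:ℝ) ≤ (n:ℝ) := by exact_mod_cast hn
  have hKN : 2 * (k:ℝ) ≤ (n:ℝ) + 1 := by exact_mod_cast hk2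
  have hK0 : (0:ℝ) < (k:ℝ) := by linarith
  have hN1 : (0:ℝ) < (n:ℝ) - 1 := by linarith
  have hfac : (0:ℝ) < (Nat.factorial k : ℝ) := by positivity
  -- rewrite the RHS exponent
  have hexp : -((k : ℝ) * ((n : ℝ) - 1) / 2) * (p - (2 * Real.log n + 2) / ((n : ℝ) - 1))
      = -(p * k * (((n:ℝ) - 1) / 2)) + ((k : ℝ) * Real.log n + k) := by
    field_simp
    ring
  have hpow : ((n:ℝ)) ^ k = Real.exp ((k:ℝ) * Real.log n) := by
    rw [Real.exp_nat_mul, Real.exp_log (by linarith)]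
  have hAB : Real.exp (-(p * (k:ℝ) * ((n : ℝ) - k)))
      ≤ Real.exp (-(p * (k:ℝ) * (((n:ℝ) - 1) / 2))) := by
    apply Real.exp_le_exp.2
    have h1 : ((n:ℝ) - 1) / 2 ≤ (n:ℝ) - k := by linarith
    have := mul_le_mul_of_nonneg_left h1 (mul_nonneg hp0 hK0.le)
    linarith
  have hkk : (k:ℝ) ^ k = (k:ℝ) ^ (k - 2) * (k:ℝ) ^ 2 := by
    rw [← pow_add]; congr 1; omega
  calc (n.choose k : ℝ) * (k : ℝ) ^ (k - 2) * p ^ (k - 1) *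
        Real.exp (-(p * k * ((n : ℝ) - k)))
      ≤ ((n:ℝ) ^ k / (Nat.factorial k : ℝ)) * (k : ℝ) ^ (k - 2) * 1 *
        Real.exp (-(p * (k:ℝ) * (((n:ℝ) - 1) / 2))) := by
        gcongr
        · exact Nat.choose_le_pow_div k n
        · exact pow_le_one₀ hp0 hp1
    _ = (n:ℝ) ^ k * ((k:ℝ) ^ k / (Nat.factorial k : ℝ)) * (1 / (k:ℝ) ^ 2) *
        Real.exp (-(p * (k:ℝ) * (((n:ℝ) - 1) / 2))) := by
        rw [hkk]; field_simp
    _ ≤ (n:ℝ) ^ k * Real.exp (k:ℝ) * (1 / (k:ℝ) ^ 2) *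
        Real.exp (-(p * (k:ℝ) * (((n:ℝ) - 1) / 2))) := by
        gcongr
        exact Real.pow_div_factorial_le_exp _ hK0.le k
    _ = (1 / (k : ℝ) ^ 2) *
        Real.exp (-((k : ℝ) * ((n : ℝ) - 1) / 2) *
          (p - (2 * Real.log n + 2) / ((n : ℝ) - 1))) := by
        rw [hexp, Real.exp_add, Real.exp_add, ← hpow]; ring
end

section
/- For m, n ≥ 2 and η ≥ 1, if p ≥ min{1, (m+n)((1+η) log(mn) + 1)/((m−1)(n−1))}, then the random bipartite graph G(m,n,p) is connected with probability at least 1 − 2(mn)^{−η} − 4(mn)^{−2η}. -/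
open scoped Classical

/-- Probability of an event in the product Bernoulli(p) measure on configurations
`α → Bool` (each coordinate independently `true` with probability `p`). -/
noncomputable def pr {α : Type*} [Fintype α] (p : ℝ) (A : Set (α → Bool)) : ℝ :=
  ∑ ω ∈ Finset.univ.filter (fun ω => ω ∈ A), ∏ e : α, (if ω e = true then p else 1 - p)

/-- The random bipartite graph on parts `Fin m` and `Fin n` determined by a
configuration of cross-edge indicators. -/
def bipGraph (m n : ℕ) (ω : Fin m × Fin n → Bool) : SimpleGraph (Fin m ⊕ Fin n) :=
  SimpleGraph.fromRel
    (fun x y => ∃ i j, x = Sum.inl i ∧ y = Sum.inr j ∧ ω (i, j) = true)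

/-!
If `G(m,n,p)` is disconnected, then some vertex set `A ∪ B` (`A` on the left, `B` on the right,
neither empty nor everything) has no edge leaving it. There are `|A|(n-|B|) + (m-|A|)|B|`
potential such edges, so the union bound over all `(A, B)`, grouped by the profile
`(|A|, |B|) = (a, b)`, gives a sum of `C(m,a) C(n,b) (1-p)^cutSize` terms. With
`s = min(a, m-a)` and `t = min(b, n-b)` we have `C(m,a) C(n,b) ≤ m^s n^t` and
`(s+t)mn ≤ (m+n) cutSize`. Hence above the threshold every profile contributes at most
`exp(-K)`, where `K = (1+η) log(mn) + 1`. The exceptions are the four profiles of a cut around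
a single vertex, and each of these contributes at most `(mn/2) exp(-K)`. The total is at most
`(17/4) mn exp(-K) ≤ 2 (mn)^(-η)`.
-/

open Finset

section BernoulliProduct

variable {α : Type*} [Fintype α] {p : ℝ}

noncomputable def bernoulliWeight (p : ℝ) (ω : α → Bool) : ℝ :=
  ∏ e, if ω e = true then p else 1 - p

lemma pr_eq_sum_filter (A : Set (α → Bool)) :
    pr p A = ∑ ω ∈ univ.filter (· ∈ A), bernoulliWeight p ω := rfl

lemma pr_forall_eq_false (S : Finset α) :
    pr p {ω : α → Bool | ∀ e ∈ S, ω e = false} = (1 - p) ^ #S := by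
  let allowed : α → Finset Bool := fun e => if e ∈ S then {false} else univ
  rw [pr_eq_sum_filter]
  calc _ = ∑ ω ∈ Fintype.piFinset allowed, ∏ e, (if ω e = true then p else 1 - p) := by
        refine sum_congr (ext fun ω => ?_) fun _ _ => rfl
        simp only [mem_filter, mem_univ, true_and, Set.mem_ofPred_eq, Fintype.mem_piFinset]
        refine forall_congr' fun e => ?_
        by_cases he : e ∈ S <;> simp [he, allowed]
    _ = ∏ e, ∑ b ∈ allowed e, (if b = true then p else 1 - p) :=
        (prod_univ_sum allowed fun _ b => if b = true then p else 1 - p).symm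
    _ = (1 - p) ^ #S := by
      rw [prod_congr rfl fun e _ => show ∑ b ∈ allowed e, (if b = true then p else 1 - p)
          = if e ∈ S then 1 - p else 1 by by_cases he : e ∈ S <;> simp [allowed, he]]
      rw [prod_ite_mem, univ_inter, prod_const]

lemma pr_add_pr_compl (A : Set (α → Bool)) : pr p A + pr p Aᶜ = 1 := by
  have huniv := pr_forall_eq_false (p := p) (∅ : Finset α)
  simp only [notMem_empty, IsEmpty.forall_iff, implies_true, Set.ofPred_true, card_empty,
    pow_zero] at huniv
  rw [← huniv, pr_eq_sum_filter, pr_eq_sum_filter, pr_eq_sum_filter]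
  simp only [Set.mem_compl_iff, Set.mem_univ, filter_true]
  exact sum_filter_add_sum_filter_not _ _ _

lemma bernoulliWeight_nonneg (hp0 : 0 ≤ p) (hp1 : p ≤ 1) (ω : α → Bool) :
    0 ≤ bernoulliWeight p ω :=
  prod_nonneg fun _ _ => by split <;> linarith

lemma pr_mono (hp0 : 0 ≤ p) (hp1 : p ≤ 1) {A B : Set (α → Bool)} (h : A ⊆ B) :
    pr p A ≤ pr p B :=
  sum_le_sum_of_subset_of_nonneg (monotone_filter_right _ fun _ _ => @h _)
    fun ω _ _ => bernoulliWeight_nonneg hp0 hp1 ω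

lemma pr_union_le (hp0 : 0 ≤ p) (hp1 : p ≤ 1) (A B : Set (α → Bool)) :
    pr p (A ∪ B) ≤ pr p A + pr p B := by
  have hunion := sum_union_inter (s₁ := univ.filter (· ∈ A)) (s₂ := univ.filter (· ∈ B))
    (f := bernoulliWeight p)
  have hinter := sum_nonneg fun ω (_ : ω ∈ univ.filter (· ∈ A) ∩ univ.filter (· ∈ B)) =>
    bernoulliWeight_nonneg hp0 hp1 ω
  rw [← filter_or] at hunion
  rw [pr_eq_sum_filter, pr_eq_sum_filter, pr_eq_sum_filter]
  calc _ = ∑ ω ∈ univ.filter (fun ω => ω ∈ A ∨ ω ∈ B), bernoulliWeight p ω :=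
        sum_congr (ext fun _ => by simp) fun _ _ => rfl
    _ ≤ _ := by linarith

lemma pr_biUnion_le {ι : Type*} (hp0 : 0 ≤ p) (hp1 : p ≤ 1) (s : Finset ι)
    (A : ι → Set (α → Bool)) :
    pr p (⋃ i ∈ s, A i) ≤ ∑ i ∈ s, pr p (A i) :=
  apply_union_le_sum (by simp [pr_eq_sum_filter]) (pr_union_le hp0 hp1 _ _) s

end BernoulliProduct

namespace SimpleGraph

variable {V : Type*} {G : SimpleGraph V}

lemma exists_adj_closed_of_not_connected [Nonempty V] (h : ¬G.Connected) :
    ∃ S : Set V, S.Nonempty ∧ S ≠ Set.univ ∧ ∀ ⦃u v⦄, G.Adj u v → (u ∈ S ↔ v ∈ S) := by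
  obtain ⟨u, v, huv⟩ : ∃ u v, ¬G.Reachable u v := by
    by_contra! hall
    exact h ⟨hall⟩
  refine ⟨{w | G.Reachable u w}, ⟨u, Reachable.refl u⟩, fun huniv => huv ?_, ?_⟩
  · exact (Set.eq_univ_iff_forall.mp huniv v :)
  · intro x y hxy
    exact ⟨fun hx => hx.trans hxy.reachable, fun hy => hy.trans hxy.symm.reachable⟩

end SimpleGraph

section Cuts

variable {α β : Type*} [Fintype α] [Fintype β] [DecidableEq α] [DecidableEq β]

def cutEdges (A : Finset α) (B : Finset β) : Finset (α × β) := A ×ˢ Bᶜ ∪ Aᶜ ×ˢ B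

def cutSize (m n a b : ℕ) : ℕ := a * (n - b) + (m - a) * b

lemma card_cutEdges (A : Finset α) (B : Finset β) :
    #(cutEdges A B) = cutSize (Fintype.card α) (Fintype.card β) #A #B := by
  rw [cutEdges, card_union_of_disjoint, card_product, card_product, card_compl, card_compl,
    cutSize]
  exact disjoint_left.mpr fun e he he' => (mem_compl.mp (mem_product.mp he').1)
    (mem_product.mp he).1

lemma cutSize_ne_zero {m n a b : ℕ} (hm : 0 < m) (hn : 0 < n) (ham : a ≤ m) (hbn : b ≤ n)
    (h0 : (a, b) ≠ (0, 0)) (hmn : (a, b) ≠ (m, n)) : cutSize m n a b ≠ 0 := by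
  simp only [cutSize, Ne, Nat.add_eq_zero_iff, Nat.mul_eq_zero, Prod.ext_iff] at *
  omega

lemma cast_cutSize {m n a b : ℕ} (ham : a ≤ m) (hbn : b ≤ n) :
    (cutSize m n a b : ℝ) = a * (n - b) + (m - a) * b := by
  rw [cutSize]
  push_cast [Nat.cast_sub ham, Nat.cast_sub hbn]
  ring

end Cuts

lemma bipGraph_adj_inl_inr {m n : ℕ} {ω : Fin m × Fin n → Bool} {i : Fin m} {j : Fin n} :
    (bipGraph m n ω).Adj (Sum.inl i) (Sum.inr j) ↔ ω (i, j) = true := by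
  simp [bipGraph]

lemma exists_cut_of_not_connected {m n : ℕ} (hm : 0 < m) {ω : Fin m × Fin n → Bool}
    (h : ¬(bipGraph m n ω).Connected) :
    ∃ P : Finset (Fin m) × Finset (Fin n), P ≠ ⊥ ∧ P ≠ ⊤ ∧
      ∀ e ∈ cutEdges P.1 P.2, ω e = false := by
  have : Nonempty (Fin m ⊕ Fin n) := ⟨Sum.inl ⟨0, hm⟩⟩
  obtain ⟨S, ⟨v, hv⟩, hS, hclosed⟩ := SimpleGraph.exists_adj_closed_of_not_connected h
  obtain ⟨w, hw⟩ := (Set.ne_univ_iff_exists_notMem S).mp hS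
  refine ⟨(univ.filter (Sum.inl · ∈ S), univ.filter (Sum.inr · ∈ S)), ?_, ?_, ?_⟩
  · rw [Ne, Prod.ext_iff]
    rcases v with i | j
    · exact fun h => (Finset.eq_empty_iff_forall_notMem.mp h.1 i) (by simpa using hv)
    · exact fun h => (Finset.eq_empty_iff_forall_notMem.mp h.2 j) (by simpa using hv)
  · rw [Ne, Prod.ext_iff]
    rcases w with i | j
    · exact fun h => hw (by simpa using (Finset.eq_univ_iff_forall.mp h.1 i))
    · exact fun h => hw (by simpa using (Finset.eq_univ_iff_forall.mp h.2 j))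
  · rintro ⟨i, j⟩ he
    by_contra hij
    have hadj := bipGraph_adj_inl_inr.mpr (Bool.not_eq_false _ ▸ hij)
    simp [cutEdges, hclosed hadj] at he

section Counting

variable {α β R : Type*} [Fintype α] [Fintype β] [CommSemiring R]

lemma sum_finset_apply_card (g : ℕ → R) :
    ∑ A : Finset α, g #A = ∑ a ∈ range (Fintype.card α + 1), (Fintype.card α).choose a * g a := by
  rw [← powerset_univ, sum_powerset_apply_card, card_univ]
  simp only [nsmul_eq_mul]

lemma sum_finset_prod_apply_card (g : ℕ → ℕ → R) :
    ∑ P : Finset α × Finset β, g #P.1 #P.2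
      = ∑ q ∈ range (Fintype.card α + 1) ×ˢ range (Fintype.card β + 1),
          (Fintype.card α).choose q.1 * (Fintype.card β).choose q.2 * g q.1 q.2 := by
  rw [Fintype.sum_prod_type, sum_product]
  simp only [sum_finset_apply_card (α := β)]
  rw [sum_finset_apply_card (α := α)
    fun a => ∑ b ∈ range (Fintype.card β + 1), ((Fintype.card β).choose b : R) * g a b]
  simp only [mul_sum, mul_assoc]

lemma ne_bot_and_ne_top_iff_card (P : Finset α × Finset β) :
    P ≠ ⊥ ∧ P ≠ ⊤ ↔ (#P.1, #P.2) ≠ (0, 0) ∧ (#P.1, #P.2) ≠ (Fintype.card α, Fintype.card β) := by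
  simp only [Ne, Prod.ext_iff, card_eq_zero, card_eq_iff_eq_univ]
  rfl

end Counting

lemma one_sub_pow_le_exp_neg_mul {c p : ℝ} (hp : min 1 c ≤ p) (hp1 : p ≤ 1) {k : ℕ}
    (hk : k ≠ 0) : (1 - p) ^ k ≤ Real.exp (-(c * k)) := by
  rcases min_le_iff.mp hp with h | h
  · rw [le_antisymm hp1 h, sub_self, zero_pow hk]
    positivity
  · calc (1 - p) ^ k ≤ Real.exp (-p) ^ k :=
          pow_le_pow_left₀ (by linarith) (Real.one_sub_le_exp_neg p) k
      _ = Real.exp (-(p * k)) := by rw [← Real.exp_nat_mul]; ring_nf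
      _ ≤ Real.exp (-(c * k)) := by gcongr

lemma min_add_min_mul_le {m n a b : ℝ} (ha : 0 ≤ a) (ham : a ≤ m) (hb : 0 ≤ b) (hbn : b ≤ n) :
    (min a (m - a) + min b (n - b)) * (m * n) ≤ (m + n) * (a * (n - b) + (m - a) * b) := by
  have hm : 0 ≤ m := ha.trans ham
  have hn : 0 ≤ n := hb.trans hbn
  rcases le_total a (m - a) with h1 | h1 <;> rcases le_total b (n - b) with h2 | h2 <;>
    simp only [min_eq_left, min_eq_right, h1, h2] <;>
    nlinarith [mul_nonneg (mul_nonneg hb hm) (sub_nonneg.mpr h1),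
      mul_nonneg (mul_nonneg ha hn) (sub_nonneg.mpr h2),
      mul_nonneg (mul_nonneg (sub_nonneg.mpr hbn) hm) (sub_nonneg.mpr h1),
      mul_nonneg (mul_nonneg (sub_nonneg.mpr ham) hn) (sub_nonneg.mpr h2),
      mul_nonneg (sub_nonneg.mpr h1) (sub_nonneg.mpr h2), mul_nonneg ha hb,
      mul_nonneg (sub_nonneg.mpr ham) (sub_nonneg.mpr hbn)]

lemma choose_le_pow_min (m a : ℕ) : m.choose a ≤ m ^ min a (m - a) := by
  rcases le_or_gt a m with ham | hma
  · rcases le_total a (m - a) with h | h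
    · rw [min_eq_left h]
      exact Nat.choose_le_pow m a
    · rw [min_eq_right h, ← Nat.choose_symm ham]
      exact Nat.choose_le_pow m (m - a)
  · simp [Nat.choose_eq_zero_of_lt hma]

noncomputable def connExponent (m n : ℕ) (η : ℝ) : ℝ := (1 + η) * Real.log (m * n) + 1

noncomputable def connThreshold (m n : ℕ) (η : ℝ) : ℝ :=
  ((m : ℝ) + n) * connExponent m n η / (((m : ℝ) - 1) * ((n : ℝ) - 1))

section Threshold

variable {m n : ℕ} {η : ℝ}

lemma connExponent_pos (hm : 1 ≤ m) (hn : 1 ≤ n) (hη : 0 ≤ η) : 0 < connExponent m n η := by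
  have : 0 ≤ Real.log (m * n) := Real.log_nonneg (by norm_cast; nlinarith)
  unfold connExponent
  positivity

lemma connThreshold_pos (hm : 2 ≤ m) (hn : 2 ≤ n) (hη : 0 ≤ η) : 0 < connThreshold m n η := by
  have hM : (2 : ℝ) ≤ m := by exact_mod_cast hm
  have hN : (2 : ℝ) ≤ n := by exact_mod_cast hn
  have hK := connExponent_pos (by omega) (by omega) hη (m := m) (n := n)
  unfold connThreshold
  apply div_pos (by positivity)
  nlinarith

lemma mul_connExponent_le_connThreshold_mul (hm : 2 ≤ m) (hn : 2 ≤ n) (hη : 0 ≤ η)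
    {r f : ℝ} (hr : 0 ≤ r) (hf : r * (m * n) ≤ (m + n) * f) :
    r * connExponent m n η ≤ connThreshold m n η * f := by
  have hM : (2 : ℝ) ≤ m := by exact_mod_cast hm
  have hN : (2 : ℝ) ≤ n := by exact_mod_cast hn
  have hK := (connExponent_pos (by omega) (by omega) hη (m := m) (n := n)).le
  have hD : 0 < ((m : ℝ) - 1) * ((n : ℝ) - 1) := by nlinarith
  rw [connThreshold, div_mul_eq_mul_div, le_div_iff₀ hD]
  calc r * connExponent m n η * ((m - 1) * (n - 1))
      ≤ r * connExponent m n η * (m * n) := by gcongr <;> linarith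
    _ ≤ (m + n) * connExponent m n η * f := by nlinarith

lemma le_connThreshold_mul (hm : 2 ≤ m) (hn : 2 ≤ n) (hη : 1 ≤ η) {s t f : ℝ}
    (hs : 0 ≤ s) (ht : 0 ≤ t) (hf : (s + t) * (m * n) ≤ (m + n) * f)
    (hcase : 2 ≤ s + t ∨ (s + t ≤ 1 ∧ ((m : ℝ) - 1) * ((n : ℝ) - 1) ≤ f)) :
    s * Real.log m + t * Real.log n + connExponent m n η ≤ connThreshold m n η * f := by
  have hM : (2 : ℝ) ≤ m := by exact_mod_cast hm
  have hN : (2 : ℝ) ≤ n := by exact_mod_cast hn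
  have hlogm : 0 ≤ Real.log m := Real.log_nonneg (by linarith)
  have hlogn : 0 ≤ Real.log n := Real.log_nonneg (by linarith)
  have hK : 2 * (Real.log m + Real.log n) + 1 ≤ connExponent m n η := by
    rw [connExponent, Real.log_mul (by positivity) (by positivity)]
    nlinarith
  rcases hcase with hst | ⟨hst, hDf⟩
  · calc s * Real.log m + t * Real.log n + connExponent m n η
        ≤ (s + t) * connExponent m n η := by
          nlinarith [mul_le_mul_of_nonneg_left hK (by linarith : (0 : ℝ) ≤ s + t - 1)]
      _ ≤ connThreshold m n η * f :=
          mul_connExponent_le_connThreshold_mul hm hn (by linarith) (by linarith) hf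
  · have hD : 0 < ((m : ℝ) - 1) * ((n : ℝ) - 1) := by nlinarith
    have hc : connThreshold m n η * (((m : ℝ) - 1) * ((n : ℝ) - 1))
        = (m + n) * connExponent m n η := by
      rw [connThreshold, div_mul_cancel₀ _ hD.ne']
    calc s * Real.log m + t * Real.log n + connExponent m n η
        ≤ (m + n) * connExponent m n η := by nlinarith
      _ ≤ connThreshold m n η * f := by
          rw [← hc]
          exact mul_le_mul_of_nonneg_left hDf (connThreshold_pos hm hn (by linarith)).le

end Threshold

-- The profiles `(#A, #B)` of the cuts around a single vertex.
def specialProfiles (m n : ℕ) : Finset (ℕ × ℕ) := {(1, 0), (0, 1), (m - 1, n), (m, n - 1)}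

section Profiles

variable {m n a b : ℕ} {η : ℝ}

lemma sub_one_mul_sub_one_le_cutSize (hm : 2 ≤ m) (hn : 2 ≤ n) (ham : a ≤ m) (hbn : b ≤ n)
    (h0 : (a, b) ≠ (0, 0)) (hmn : (a, b) ≠ (m, n)) (hsp : (a, b) ∉ specialProfiles m n)
    (hst : min a (m - a) + min b (n - b) ≤ 1) :
    (m - 1) * (n - 1) ≤ cutSize m n a b := by
  simp only [specialProfiles, mem_insert, mem_singleton, Ne, Prod.ext_iff, not_or] at h0 hmn hsp
  have hcases : (a = 0 ∧ b = n) ∨ (a = m ∧ b = 0) ∨ (a = 1 ∧ b = n) ∨ (a = m - 1 ∧ b = 0) ∨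
      (a = 0 ∧ b = n - 1) ∨ (a = m ∧ b = 1) := by
    rcases le_total a (m - a) with h1 | h1 <;> rcases le_total b (n - b) with h2 | h2 <;>
      simp only [min_eq_left, min_eq_right, h1, h2] at hst <;> omega
  rcases hcases with ⟨rfl, rfl⟩ | ⟨rfl, rfl⟩ | ⟨rfl, rfl⟩ | ⟨rfl, rfl⟩ | ⟨rfl, rfl⟩ | ⟨rfl, rfl⟩ <;>
    simp [cutSize] <;> exact Nat.mul_le_mul (by omega) (by omega)

lemma choose_mul_choose_mul_exp_le (hm : 2 ≤ m) (hn : 2 ≤ n) (hη : 1 ≤ η)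
    (ham : a ≤ m) (hbn : b ≤ n) (h0 : (a, b) ≠ (0, 0)) (hmn : (a, b) ≠ (m, n))
    (hsp : (a, b) ∉ specialProfiles m n) :
    (m.choose a * n.choose b : ℝ) * Real.exp (-(connThreshold m n η * cutSize m n a b))
      ≤ Real.exp (-connExponent m n η) := by
  set s := min a (m - a)
  set t := min b (n - b)
  have hchoose : (m.choose a * n.choose b : ℝ) ≤ Real.exp (s * Real.log m + t * Real.log n) := by
    rw [Real.exp_add, Real.exp_nat_mul, Real.exp_nat_mul, Real.exp_log (by positivity),
      Real.exp_log (by positivity)]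
    exact_mod_cast Nat.mul_le_mul (choose_le_pow_min m a) (choose_le_pow_min n b)
  have hst : ((s : ℝ) + t) * (m * n) ≤ (m + n) * cutSize m n a b := by
    have hs : (s : ℝ) = min (a : ℝ) (m - a) := by simp [s, Nat.cast_sub ham]
    have ht : (t : ℝ) = min (b : ℝ) (n - b) := by simp [t, Nat.cast_sub hbn]
    rw [hs, ht, cast_cutSize ham hbn]
    exact min_add_min_mul_le (Nat.cast_nonneg a) (by exact_mod_cast ham) (Nat.cast_nonneg b)
      (by exact_mod_cast hbn)
  have hcase : 2 ≤ (s : ℝ) + t ∨ ((s : ℝ) + t ≤ 1 ∧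
      ((m : ℝ) - 1) * ((n : ℝ) - 1) ≤ cutSize m n a b) := by
    rcases le_or_gt 2 (s + t) with h | h
    · exact Or.inl (by exact_mod_cast h)
    · refine Or.inr ⟨by exact_mod_cast Nat.lt_succ_iff.mp h, ?_⟩
      have := sub_one_mul_sub_one_le_cutSize hm hn ham hbn h0 hmn hsp (by omega)
      rw [← Nat.cast_one, ← Nat.cast_sub (by omega), ← Nat.cast_sub (by omega)]
      exact_mod_cast this
  have hexp := le_connThreshold_mul hm hn hη (Nat.cast_nonneg s) (Nat.cast_nonneg t) hst hcase
  calc (m.choose a * n.choose b : ℝ) * Real.exp (-(connThreshold m n η * cutSize m n a b))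
      ≤ Real.exp (s * Real.log m + t * Real.log n)
          * Real.exp (-(connThreshold m n η * cutSize m n a b)) := by gcongr
    _ ≤ Real.exp (-connExponent m n η) := by
        rw [← Real.exp_add]
        exact Real.exp_le_exp.mpr (by linarith)

lemma choose_mul_choose_mul_exp_le_of_mem_specialProfiles (hm : 2 ≤ m) (hn : 2 ≤ n)
    (hη : 0 ≤ η) (h : (a, b) ∈ specialProfiles m n) :
    (m.choose a * n.choose b : ℝ) * Real.exp (-(connThreshold m n η * cutSize m n a b))
      ≤ m * n / 2 * Real.exp (-connExponent m n η) := by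
  have hM : (2 : ℝ) ≤ m := by exact_mod_cast hm
  have hN : (2 : ℝ) ≤ n := by exact_mod_cast hn
  have hchoose_pred : ∀ k, 1 ≤ k → k.choose (k - 1) = k := fun k hk => by
    rw [Nat.choose_symm hk, Nat.choose_one_right]
  obtain ⟨hC, hf⟩ | ⟨hC, hf⟩ : (m.choose a * n.choose b = m ∧ cutSize m n a b = n) ∨
      (m.choose a * n.choose b = n ∧ cutSize m n a b = m) := by
    simp only [specialProfiles, mem_insert, mem_singleton, Prod.mk.injEq] at h
    rcases h with ⟨ha, hb⟩ | ⟨ha, hb⟩ | ⟨ha, hb⟩ | ⟨ha, hb⟩ <;>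
      simp [ha, hb, cutSize, hchoose_pred m (by omega), hchoose_pred n (by omega),
        Nat.sub_sub_self (by omega : 1 ≤ m), Nat.sub_sub_self (by omega : 1 ≤ n)]
  · have hK : connExponent m n η ≤ connThreshold m n η * n := by
      simpa using mul_connExponent_le_connThreshold_mul hm hn hη zero_le_one (f := n)
        (by nlinarith)
    rw [← Nat.cast_mul, hC, hf]
    calc (m : ℝ) * Real.exp (-(connThreshold m n η * n))
        ≤ m * Real.exp (-connExponent m n η) := by gcongr
      _ ≤ m * n / 2 * Real.exp (-connExponent m n η) := by gcongr; nlinarith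
  · have hK : connExponent m n η ≤ connThreshold m n η * m := by
      simpa using mul_connExponent_le_connThreshold_mul hm hn hη zero_le_one (f := m)
        (by nlinarith)
    rw [← Nat.cast_mul, hC, hf]
    calc (n : ℝ) * Real.exp (-(connThreshold m n η * m))
        ≤ n * Real.exp (-connExponent m n η) := by gcongr
      _ ≤ m * n / 2 * Real.exp (-connExponent m n η) := by gcongr; nlinarith

end Profiles

section Assembly

variable {m n : ℕ} {η : ℝ}

lemma sum_profiles_le (hm : 2 ≤ m) (hn : 2 ≤ n) (hη : 1 ≤ η) :
    ∑ q ∈ range (m + 1) ×ˢ range (n + 1), (m.choose q.1 : ℝ) * n.choose q.2 *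
        (if q ≠ (0, 0) ∧ q ≠ (m, n) then Real.exp (-(connThreshold m n η * cutSize m n q.1 q.2))
          else 0)
      ≤ ((m + 1) * (n + 1) + 4 * (m * n / 2)) * Real.exp (-connExponent m n η) := by
  set E := Real.exp (-connExponent m n η)
  have hterm : ∀ q ∈ range (m + 1) ×ˢ range (n + 1), (m.choose q.1 : ℝ) * n.choose q.2 *
      (if q ≠ (0, 0) ∧ q ≠ (m, n) then Real.exp (-(connThreshold m n η * cutSize m n q.1 q.2))
        else 0) ≤ E + if q ∈ specialProfiles m n then m * n / 2 * E else 0 := by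
    rintro ⟨a, b⟩ hq
    simp only [mem_product, mem_range] at hq
    by_cases hproper : (a, b) ≠ (0, 0) ∧ (a, b) ≠ (m, n)
    · rw [if_pos hproper]
      by_cases hsp : (a, b) ∈ specialProfiles m n
      · rw [if_pos hsp]
        have := choose_mul_choose_mul_exp_le_of_mem_specialProfiles hm hn (by linarith) hsp
          (η := η)
        have : 0 ≤ E := (Real.exp_pos _).le
        linarith
      · rw [if_neg hsp, add_zero]
        exact choose_mul_choose_mul_exp_le hm hn hη (by omega) (by omega) hproper.1 hproper.2 hsp
    · rw [if_neg hproper, mul_zero]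
      positivity
  have hspecial : #((range (m + 1) ×ˢ range (n + 1)) ∩ specialProfiles m n) ≤ 4 :=
    (card_le_card inter_subset_right).trans card_le_four
  calc _ ≤ ∑ q ∈ range (m + 1) ×ˢ range (n + 1),
        (E + if q ∈ specialProfiles m n then m * n / 2 * E else 0) := sum_le_sum hterm
    _ = (m + 1) * (n + 1) * E
          + #((range (m + 1) ×ˢ range (n + 1)) ∩ specialProfiles m n) * (m * n / 2 * E) := by
        rw [sum_add_distrib, sum_ite_mem, sum_const, sum_const, card_product, card_range,
          card_range, nsmul_eq_mul, nsmul_eq_mul]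
        push_cast
        ring
    _ ≤ ((m + 1) * (n + 1) + 4 * (m * n / 2)) * E := by
        have : ((#((range (m + 1) ×ˢ range (n + 1)) ∩ specialProfiles m n) : ℕ) : ℝ) ≤ 4 := by
          exact_mod_cast hspecial
        have : 0 ≤ m * n / 2 * E := by positivity
        nlinarith

lemma mul_exp_neg_connExponent_le_rpow (hm : 2 ≤ m) (hn : 2 ≤ n) :
    ((m + 1) * (n + 1) + 4 * (m * n / 2)) * Real.exp (-connExponent m n η)
      ≤ 2 * ((m * n : ℕ) : ℝ) ^ (-η) := by
  have hM : (2 : ℝ) ≤ m := by exact_mod_cast hm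
  have hN : (2 : ℝ) ≤ n := by exact_mod_cast hn
  have hmn : (0 : ℝ) < m * n := by positivity
  have hexp_neg_one : Real.exp (-1) ≤ 8 / 17 := by
    rw [Real.exp_neg]
    exact inv_le_of_inv_le₀ (by norm_num) (by linarith [Real.exp_one_gt_d9])
  rw [Nat.cast_mul, Real.rpow_def_of_pos hmn, connExponent]
  set L := Real.log (m * n)
  have hL : Real.exp L = m * n := Real.exp_log hmn
  calc ((m + 1) * (n + 1) + 4 * (m * n / 2)) * Real.exp (-((1 + η) * L + 1))
      ≤ 17 / 4 * (m * n) * Real.exp (-((1 + η) * L + 1)) := by gcongr; nlinarith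
    _ = 17 / 4 * Real.exp (-1) * Real.exp (L * -η) := by
        rw [← hL, mul_assoc, ← Real.exp_add, mul_assoc, ← Real.exp_add]
        ring_nf
    _ ≤ 2 * Real.exp (L * -η) := by gcongr; linarith

end Assembly

section Connectivity

variable {m n : ℕ} {η p : ℝ}

lemma pr_not_connected_le_sum_cuts (hm : 0 < m) (hp0 : 0 ≤ p) (hp1 : p ≤ 1) :
    pr p {ω : Fin m × Fin n → Bool | (bipGraph m n ω).Connected}ᶜ
      ≤ ∑ P ∈ univ.filter (fun P : Finset (Fin m) × Finset (Fin n) => P ≠ ⊥ ∧ P ≠ ⊤),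
          (1 - p) ^ cutSize m n #P.1 #P.2 := by
  calc _ ≤ pr p (⋃ P ∈ univ.filter (fun P : Finset (Fin m) × Finset (Fin n) => P ≠ ⊥ ∧ P ≠ ⊤),
          {ω | ∀ e ∈ cutEdges P.1 P.2, ω e = false}) := by
        refine pr_mono hp0 hp1 fun ω hω => ?_
        obtain ⟨P, hbot, htop, hcut⟩ := exists_cut_of_not_connected hm hω
        exact Set.mem_biUnion (by simp [hbot, htop]) hcut
    _ ≤ _ := pr_biUnion_le hp0 hp1 _ _
    _ = _ := by
        refine sum_congr rfl fun P _ => ?_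
        rw [pr_forall_eq_false, card_cutEdges, Fintype.card_fin, Fintype.card_fin]

lemma pr_not_connected_le (hm : 2 ≤ m) (hn : 2 ≤ n) (hη : 1 ≤ η) (hp0 : 0 ≤ p) (hp1 : p ≤ 1)
    (hp : min 1 (connThreshold m n η) ≤ p) :
    pr p {ω : Fin m × Fin n → Bool | (bipGraph m n ω).Connected}ᶜ
      ≤ 2 * ((m * n : ℕ) : ℝ) ^ (-η) := by
  let g : ℕ → ℕ → ℝ := fun a b =>
    if (a, b) ≠ (0, 0) ∧ (a, b) ≠ (m, n) then Real.exp (-(connThreshold m n η * cutSize m n a b))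
    else 0
  calc _ ≤ ∑ P ∈ univ.filter (fun P : Finset (Fin m) × Finset (Fin n) => P ≠ ⊥ ∧ P ≠ ⊤),
          (1 - p) ^ cutSize m n #P.1 #P.2 := pr_not_connected_le_sum_cuts (by omega) hp0 hp1
    _ ≤ ∑ P ∈ univ.filter (fun P : Finset (Fin m) × Finset (Fin n) => P ≠ ⊥ ∧ P ≠ ⊤),
          Real.exp (-(connThreshold m n η * cutSize m n #P.1 #P.2)) := by
        refine sum_le_sum fun P hP => one_sub_pow_le_exp_neg_mul hp hp1 ?_
        have hP' := (ne_bot_and_ne_top_iff_card P).mp (mem_filter.mp hP).2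
        rw [Fintype.card_fin, Fintype.card_fin] at hP'
        exact cutSize_ne_zero (by omega) (by omega)
          ((card_le_univ P.1).trans_eq (Fintype.card_fin m))
          ((card_le_univ P.2).trans_eq (Fintype.card_fin n)) hP'.1 hP'.2
    _ = ∑ P : Finset (Fin m) × Finset (Fin n), g #P.1 #P.2 := by
        rw [sum_filter]
        refine sum_congr rfl fun P _ => ?_
        simp only [g, ne_bot_and_ne_top_iff_card, Fintype.card_fin]
    _ = _ := by rw [sum_finset_prod_apply_card, Fintype.card_fin, Fintype.card_fin]
    _ ≤ _ := sum_profiles_le hm hn hη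
    _ ≤ _ := mul_exp_neg_connExponent_le_rpow hm hn

end Connectivity

/-- For `m, n ≥ 2`, `η ≥ 1` and `p ≥ min{1, (m+n)((1+η) log(mn) + 1)/((m−1)(n−1))}`,
the random bipartite graph `G(m,n,p)` is connected with probability at least
`1 − 2(mn)^{−η} − 4(mn)^{−2η}`. -/
theorem stmt_5 (m n : ℕ) (hm : 2 ≤ m) (hn : 2 ≤ n) (η p : ℝ) (hη : 1 ≤ η)
    (hp0 : 0 ≤ p) (hp1 : p ≤ 1)
    (hp : min 1 (((m : ℝ) + n) * ((1 + η) * Real.log (m * n) + 1) /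
        (((m : ℝ) - 1) * ((n : ℝ) - 1))) ≤ p) :
    1 - 2 * ((m * n : ℕ) : ℝ) ^ (-η) - 4 * ((m * n : ℕ) : ℝ) ^ (-(2 * η))
      ≤ pr p {ω : Fin m × Fin n → Bool | (bipGraph m n ω).Connected} := by
  -- `hp` is `min 1 (connThreshold m n η) ≤ p` after unfolding.
  have hdisconnected := pr_not_connected_le hm hn hη hp0 hp1 hp
  have hcompl := pr_add_pr_compl (p := p) {ω : Fin m × Fin n → Bool | (bipGraph m n ω).Connected}
  have : 0 ≤ 4 * ((m * n : ℕ) : ℝ) ^ (-(2 * η)) := by positivity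
  linarith
end

section
/- If the sparsity graph G(Ω) of the noiseless symmetric non-negative rank-1 RPCA problem has a bipartite connected component, then the global minimum of the problem is not unique: for every global minimizer u = u*, there exists a distinct point û with the same (optimal, zero) objective value. -/
/-- The sparsity graph of a measurement set `Ω ⊆ {1,…,n}²` (self-loops are
allowed in `Ω` but do not create edges of the simple graph). -/
def graphOf {n : ℕ} (Ω : Finset (Fin n × Fin n)) : SimpleGraph (Fin n) :=
  SimpleGraph.fromRel (fun i j => (i, j) ∈ Ω)

/-- If the sparsity graph `G(Ω)` has a bipartite connected component, then the global
minimum of the noiseless symmetric non-negative rank-1 RPCA is not unique: there is a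
point `û ≠ u*`, entrywise non-negative, achieving the optimal objective value `0`. -/
theorem stmt_9 {n : ℕ} (ustar : Fin n → ℝ) (hpos : ∀ i, 0 < ustar i)
    (Ω : Finset (Fin n × Fin n))
    (c : (graphOf Ω).ConnectedComponent) (V₁ V₂ : Set (Fin n))
    (hcov : V₁ ∪ V₂ = c.supp) (hdisj : Disjoint V₁ V₂)
    (hbip : ∀ i j, (i, j) ∈ Ω →
      ¬(i ∈ V₁ ∧ j ∈ V₁) ∧ ¬(i ∈ V₂ ∧ j ∈ V₂)) :
    ∃ u : Fin n → ℝ, u ≠ ustar ∧ (∀ i, 0 ≤ u i) ∧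
      ∑ e ∈ Ω, |u e.1 * u e.2 - ustar e.1 * ustar e.2| = 0 := by
  classical
  set u : Fin n → ℝ := fun i =>
    if i ∈ V₁ then 2 * ustar i else if i ∈ V₂ then ustar i / 2 else ustar i with hu
  have hsupp : ∀ i, i ∈ c.supp ↔ (graphOf Ω).connectedComponentMk i = c := by
    intro i; rfl
  have hmk : ∀ i j, i ≠ j → (i, j) ∈ Ω →
      (graphOf Ω).connectedComponentMk i = (graphOf Ω).connectedComponentMk j := by
    intro i j hne hij
    have hadj : (graphOf Ω).Adj i j := ⟨hne, Or.inl hij⟩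
    exact SimpleGraph.ConnectedComponent.sound (SimpleGraph.Adj.reachable hadj)
  have hsame : ∀ i j, i ≠ j → (i, j) ∈ Ω → i ∈ c.supp → j ∈ c.supp := by
    intro i j hne hij hi
    rw [hsupp] at hi ⊢
    rw [← hmk i j hne hij, hi]
  have hsame' : ∀ i j, i ≠ j → (i, j) ∈ Ω → j ∈ c.supp → i ∈ c.supp := by
    intro i j hne hij hj
    rw [hsupp] at hj ⊢
    rw [hmk i j hne hij, hj]
  have key : ∀ i j, (i, j) ∈ Ω → u i * u j = ustar i * ustar j := by
    intro i j hij
    rcases eq_or_ne i j with rfl | hne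
    · have h := hbip i i hij
      have h1 : i ∉ V₁ := fun hm => h.1 ⟨hm, hm⟩
      have h2 : i ∉ V₂ := fun hm => h.2 ⟨hm, hm⟩
      simp [hu, h1, h2]
    · have hb := hbip i j hij
      by_cases hi1 : i ∈ V₁
      · have hisupp : i ∈ c.supp := hcov ▸ Or.inl hi1
        have hjsupp : j ∈ c.supp := hsame i j hne hij hisupp
        have hj : j ∈ V₁ ∪ V₂ := hcov ▸ hjsupp
        have hj1 : j ∉ V₁ := fun hm => hb.1 ⟨hi1, hm⟩
        have hj2 : j ∈ V₂ := hj.resolve_left hj1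
        have hi2 : i ∉ V₂ := fun hm => hdisj.ne_of_mem hi1 hm rfl
        simp only [hu, if_pos hi1, if_neg hj1, if_pos hj2]
        ring
      · by_cases hi2 : i ∈ V₂
        · have hisupp : i ∈ c.supp := hcov ▸ Or.inr hi2
          have hjsupp : j ∈ c.supp := hsame i j hne hij hisupp
          have hj : j ∈ V₁ ∪ V₂ := hcov ▸ hjsupp
          have hj2 : j ∉ V₂ := fun hm => hb.2 ⟨hi2, hm⟩
          have hj1 : j ∈ V₁ := hj.resolve_right hj2
          simp only [hu, if_neg hi1, if_pos hi2, if_pos hj1]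
          ring
        · have hisupp : i ∉ c.supp := by
            rw [← hcov]; intro h; rcases h with h | h <;> [exact hi1 h; exact hi2 h]
          have hjsupp : j ∉ c.supp := fun hj => hisupp (hsame' i j hne hij hj)
          have hj : j ∉ V₁ ∪ V₂ := fun h => hjsupp (hcov ▸ h)
          have hj1 : j ∉ V₁ := fun h => hj (Or.inl h)
          have hj2 : j ∉ V₂ := fun h => hj (Or.inr h)
          simp [hu, hi1, hi2, hj1, hj2]
  refine ⟨u, ?_, ?_, ?_⟩
  · obtain ⟨v, hv⟩ := c.exists_rep
    have hvsupp : v ∈ c.supp := by rw [hsupp]; exact hv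
    have hv' : v ∈ V₁ ∪ V₂ := hcov ▸ hvsupp
    intro heq
    have := congrFun heq v
    have hpv := hpos v
    rcases hv' with h1 | h1
    · simp only [hu, if_pos h1] at this; linarith
    · have : u v = ustar v := congrFun heq v
      have h2 : v ∉ V₁ := fun hm => hdisj.ne_of_mem hm h1 rfl
      simp only [hu, if_neg h2, if_pos h1] at this; linarith
  · intro i
    have := (hpos i).le
    simp only [hu]
    split_ifs <;> linarith
  · refine Finset.sum_eq_zero fun e he => ?_
    rw [key e.1 e.2 (by simpa using he)]
    simp
end

section
/- If u* ∈ R^n is non-negative and nonzero with u*_1 = 0 and u*_j > 0 for all j ≥ 2, and Ω = {1,…,n}² \ {(1,1)}, then for any β > 0 the point u with u_1 = β and u_j = 0 for j ≥ 2 is a spurious local minimum of f(u) = Σ_{(i,j)∈Ω} |u_i u_j − u*_i u*_j| over u ≥ 0: there exist ε̄₁, ε̄ > 0 such that f(û) ≥ f(u) for all feasible perturbations û with û_1 = β + ε₁, |ε₁| ≤ ε̄₁, and û_j = ε_j ≥ 0 for j ≥ 2 with Σ_{j≥2} ε_j ≤ ε̄, while f(u*) = 0 < f(u). -/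
/-- Measurement set `Ω = {1,…,n}² \ {(1,1)}` (all index pairs except the top-left
diagonal entry), for dimension `n + 2 ≥ 2`. -/
def obs (n : ℕ) : Finset (Fin (n + 2) × Fin (n + 2)) :=
  Finset.univ \ {((0 : Fin (n + 2)), (0 : Fin (n + 2)))}

/-- Objective `f(u) = Σ_{(i,j)∈Ω} |u_i u_j − u*_i u*_j|`. -/
def fObj (n : ℕ) (ustar u : Fin (n + 2) → ℝ) : ℝ :=
  ∑ e ∈ obs n, |u e.1 * u e.2 - ustar e.1 * ustar e.2|

lemma fObj_add (n : ℕ) (ustar v : Fin (n + 2) → ℝ) :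
    fObj n ustar v + |v 0 * v 0 - ustar 0 * ustar 0| =
      ∑ i, ∑ j, |v i * v j - ustar i * ustar j| := by
  unfold fObj obs
  rw [Finset.sdiff_singleton_eq_erase,
    Finset.sum_erase_add _ _ (Finset.mem_univ _), Fintype.sum_prod_type]

lemma hsum (n : ℕ) (ustar v : Fin (n + 2) → ℝ) :
    ∑ i : Fin (n + 2), ∑ j : Fin (n + 2),
      (ustar i * ustar j - v i * v j + (2 * (if i = 0 then v i else 0)) * v j
        + (2 * v i) * (if j = 0 then v j else 0)
        - (2 * (if i = 0 then v i else 0)) * (if j = 0 then v j else 0))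
    = (∑ i, ustar i) * (∑ i, ustar i) - (∑ i, v i) * (∑ i, v i)
        + 4 * (v 0 * (∑ i, v i)) - 2 * (v 0 * v 0) := by
  have hw : ∑ i : Fin (n + 2), (if i = 0 then v i else 0) = v 0 := by
    simp
  simp only [Finset.sum_add_distrib, Finset.sum_sub_distrib, ← Finset.mul_sum,
    ← Finset.sum_mul, hw]
  ring


/-- If `u* ≥ 0` with `u*_1 = 0` and `u*_j > 0` for `j ≥ 2`, and
`Ω = {1,…,n}² \ {(1,1)}`, then for any `β > 0` the point `u = (β,0,…,0)` is a spurious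
local minimum: small feasible perturbations do not decrease the objective, while
`f(u*) = 0 < f(u)`. -/
theorem stmt_10 (n : ℕ) (ustar : Fin (n + 2) → ℝ)
    (h0 : ustar 0 = 0) (hpos : ∀ j, j ≠ 0 → 0 < ustar j)
    (β : ℝ) (hβ : 0 < β) :
    ∃ ε₁ ε₂ : ℝ, 0 < ε₁ ∧ 0 < ε₂ ∧
      (∀ v : Fin (n + 2) → ℝ, (∀ i, 0 ≤ v i) → |v 0 - β| ≤ ε₁ →
        (∑ j ∈ Finset.univ.erase (0 : Fin (n + 2)), v j) ≤ ε₂ →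
        fObj n ustar (fun i => if i = 0 then β else 0) ≤ fObj n ustar v) ∧
      fObj n ustar ustar = 0 ∧
      0 < fObj n ustar (fun i => if i = 0 then β else 0) := by
  have hnn : ∀ i, 0 ≤ ustar i := by
    intro i
    rcases eq_or_ne i 0 with h | h
    · rw [h, h0]
    · exact (hpos i h).le
  set T : ℝ := ∑ i, ustar i with hT
  have h10 : (1 : Fin (n + 2)) ≠ 0 := by
    simp [Fin.ext_iff, Fin.val_one]
  have hTpos : 0 < T := by
    have := Finset.single_le_sum (f := ustar) (fun i _ => hnn i)
      (Finset.mem_univ (1 : Fin (n + 2)))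
    exact lt_of_lt_of_le (hpos 1 h10) this
  -- value at the candidate point u = (β,0,…,0)
  have hfu : fObj n ustar (fun i => if i = 0 then β else 0) = T * T := by
    have h := fObj_add n ustar (fun i => if i = 0 then β else 0)
    have hcongr : ∑ i : Fin (n + 2), ∑ j : Fin (n + 2),
        |(if i = 0 then β else 0) * (if j = 0 then β else 0) - ustar i * ustar j|
        = ∑ i : Fin (n + 2), ∑ j : Fin (n + 2),
          (ustar i * ustar j + (if i = 0 then β else 0) * (if j = 0 then β else 0)) := by
      refine Finset.sum_congr rfl fun i _ => Finset.sum_congr rfl fun j _ => ?_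
      rcases eq_or_ne i 0 with hi | hi <;> rcases eq_or_ne j 0 with hj | hj <;>
        simp [hi, hj, h0, abs_of_nonneg, mul_nonneg (hnn _) (hnn _),
          abs_of_nonneg (mul_nonneg hβ.le hβ.le)]
    have hub : ∑ i : Fin (n + 2), (if i = 0 then β else 0) = β := by simp
    rw [hcongr] at h
    simp only [Finset.sum_add_distrib, ← Finset.mul_sum, ← Finset.sum_mul, hub, h0,
      eq_self_iff_true, if_true, mul_zero, sub_zero,
      abs_of_nonneg (mul_nonneg hβ.le hβ.le)] at h
    linarith
  refine ⟨β / 2, β, by linarith, hβ, ?_, ?_, ?_⟩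
  · intro v hv h1 h2
    set a : ℝ := v 0 with ha
    set A : ℝ := ∑ i, v i with hA
    have hS : ∑ j ∈ Finset.univ.erase (0 : Fin (n + 2)), v j = A - a :=
      Finset.sum_erase_eq_sub (Finset.mem_univ _)
    rw [hS] at h2
    have hSnn : (0 : ℝ) ≤ A - a := by
      rw [← hS]; exact Finset.sum_nonneg fun j _ => hv j
    have ha' : β / 2 ≤ a := by
      rcases abs_le.1 h1 with ⟨h', _⟩; linarith
    -- pointwise lower bound on each term of the full double sum
    have hpt : ∀ i j : Fin (n + 2),
        ustar i * ustar j - v i * v j + (2 * (if i = 0 then v i else 0)) * v j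
          + (2 * v i) * (if j = 0 then v j else 0)
          - (2 * (if i = 0 then v i else 0)) * (if j = 0 then v j else 0)
        ≤ |v i * v j - ustar i * ustar j| := by
      intro i j
      rcases eq_or_ne i 0 with hi | hi <;> rcases eq_or_ne j 0 with hj | hj
      · simp [hi, hj, h0, abs_of_nonneg (mul_nonneg (hv 0) (hv 0))]
        nlinarith [mul_nonneg (hv 0) (hv 0)]
      · simp [hi, hj, h0, abs_of_nonneg (mul_nonneg (hv 0) (hv j))]
        nlinarith [mul_nonneg (hv 0) (hv j)]
      · simp [hi, hj, h0, abs_of_nonneg (mul_nonneg (hv i) (hv 0))]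
        nlinarith [mul_nonneg (hv i) (hv 0)]
      · simp [hi, hj]
        nlinarith [neg_abs_le (v i * v j - ustar i * ustar j)]
    have hge : ∑ i : Fin (n + 2), ∑ j : Fin (n + 2),
        (ustar i * ustar j - v i * v j + (2 * (if i = 0 then v i else 0)) * v j
          + (2 * v i) * (if j = 0 then v j else 0)
          - (2 * (if i = 0 then v i else 0)) * (if j = 0 then v j else 0))
        ≤ ∑ i : Fin (n + 2), ∑ j : Fin (n + 2), |v i * v j - ustar i * ustar j| :=
      Finset.sum_le_sum fun i _ => Finset.sum_le_sum fun j _ => hpt i j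
    rw [hsum n ustar v] at hge
    have h := fObj_add n ustar v
    have habs : |v 0 * v 0 - ustar 0 * ustar 0| = a * a := by
      rw [h0, mul_zero, sub_zero, abs_of_nonneg (mul_nonneg (hv 0) (hv 0))]
    rw [habs] at h
    rw [hfu]
    nlinarith [mul_nonneg hSnn (show (0:ℝ) ≤ 2 * a - (A - a) by linarith)]
  · simp [fObj]
  · rw [hfu]; positivity
end

section
/- For the noiseless symmetric problem f(u) = Σ_{(i,j)∈Ω} |u_i u_j − u*_i u*_j| over u ≥ 0, if G(Ω) is connected and non-bipartite and u* > 0, then every directional-min-stationary point u satisfies u > 0 entrywise or u = 0. -/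
/-- `dirDerivIs f u d L` : the one-sided directional derivative of `f` at `u` in
direction `d` exists and equals `L`. -/
def dirDerivIs {n : ℕ} (f : (Fin n → ℝ) → ℝ) (u d : Fin n → ℝ) (L : ℝ) : Prop :=
  Filter.Tendsto (fun t : ℝ => (f (u + t • d) - f u) / t)
    (nhdsWithin 0 (Set.Ioi 0)) (nhds L)

noncomputable def slopeFn {n : ℕ} (u : Fin n → ℝ) (k : Fin n)
    (e : Fin n × Fin n) (t : ℝ) : ℝ :=
  if e.1 = k ∧ e.2 = k then t else if e.1 = k then u e.2
    else if e.2 = k then u e.1 else 0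

lemma key_deriv {n : ℕ} (ustar : Fin n → ℝ) (hpos : ∀ i, 0 < ustar i)
    (Ω : Finset (Fin n × Fin n)) (u : Fin n → ℝ) (k : Fin n) (hk : u k = 0) :
    dirDerivIs (fun v => ∑ e ∈ Ω, |v e.1 * v e.2 - ustar e.1 * ustar e.2|) u
      (Pi.single k 1) (-(∑ e ∈ Ω, slopeFn u k e 0)) := by
  classical
  unfold dirDerivIs
  set d : Fin n → ℝ := Pi.single k 1 with hd
  have hvk : ∀ t : ℝ, (u + t • d) k = t := by
    intro t; simp [hd, Pi.single_apply, hk]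
  have hvne : ∀ (t : ℝ) (i : Fin n), i ≠ k → (u + t • d) i = u i := by
    intro t i hi; simp [hd, Pi.single_apply, hi]
  -- per-edge eventual identity
  have hev : ∀ e ∈ Ω, ∀ᶠ t in nhdsWithin (0:ℝ) (Set.Ioi 0),
      |(u + t • d) e.1 * (u + t • d) e.2
        - ustar e.1 * ustar e.2|
      = |u e.1 * u e.2 - ustar e.1 * ustar e.2| - t * slopeFn u k e t := by
    intro e _
    obtain ⟨i, j⟩ := e
    have hc : 0 < ustar i * ustar j := mul_pos (hpos i) (hpos j)
    by_cases h1 : i = k <;> by_cases h2 : j = k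
    · subst h1; subst h2
      have htend : Filter.Tendsto (fun t : ℝ => t * t)
          (nhdsWithin (0:ℝ) (Set.Ioi 0)) (nhds 0) := by
        simpa using (Filter.tendsto_id.mul Filter.tendsto_id :
          Filter.Tendsto _ (nhds (0:ℝ)) _).mono_left
          (nhdsWithin_le_nhds (s := Set.Ioi (0:ℝ)))
      filter_upwards [htend.eventually_lt_const hc] with t hlt
      simp only [slopeFn, and_self, if_true]
      rw [hvk, hk]
      rw [abs_of_nonpos (by linarith), abs_of_nonpos (by linarith)]
      ring
    · subst h1
      have htend : Filter.Tendsto (fun t : ℝ => t * u j)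
          (nhdsWithin (0:ℝ) (Set.Ioi 0)) (nhds 0) := by
        simpa using ((Filter.tendsto_id.mul_const (u j) :
          Filter.Tendsto _ (nhds (0:ℝ)) _)).mono_left
          (nhdsWithin_le_nhds (s := Set.Ioi (0:ℝ)))
      filter_upwards [htend.eventually_lt_const hc] with t hlt
      simp only [slopeFn, h2, and_false, if_false, if_true]
      rw [hvk, hvne t j h2, hk]
      rw [abs_of_nonpos (by linarith), abs_of_nonpos (by linarith)]
      ring
    · subst h2
      have htend : Filter.Tendsto (fun t : ℝ => t * u i)
          (nhdsWithin (0:ℝ) (Set.Ioi 0)) (nhds 0) := by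
        simpa using ((Filter.tendsto_id.mul_const (u i) :
          Filter.Tendsto _ (nhds (0:ℝ)) _)).mono_left
          (nhdsWithin_le_nhds (s := Set.Ioi (0:ℝ)))
      filter_upwards [htend.eventually_lt_const hc] with t hlt
      simp only [slopeFn, h1, false_and, if_false, if_true]
      rw [hvk, hvne t i h1, hk]
      rw [show u i * t - ustar i * ustar j = -(ustar i * ustar j - t * u i) by ring,
        abs_neg, abs_of_nonneg (by linarith),
        show u i * 0 - ustar i * ustar j = -(ustar i * ustar j) by ring,
        abs_neg, abs_of_pos hc]
    · filter_upwards with t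
      rw [hvne t i h1, hvne t j h2]
      simp [slopeFn, h1, h2]
  have hevAll : ∀ᶠ t in nhdsWithin (0:ℝ) (Set.Ioi 0), ∀ e ∈ Ω,
      |(u + t • d) e.1 * (u + t • d) e.2
        - ustar e.1 * ustar e.2|
      = |u e.1 * u e.2 - ustar e.1 * ustar e.2| - t * slopeFn u k e t :=
    (Filter.eventually_all_finset Ω).2 hev
  have hquot : ∀ᶠ t in nhdsWithin (0:ℝ) (Set.Ioi 0),
      ((∑ e ∈ Ω, |(u + t • d) e.1 * (u + t • d) e.2
        - ustar e.1 * ustar e.2|)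
        - ∑ e ∈ Ω, |u e.1 * u e.2 - ustar e.1 * ustar e.2|) / t
      = -∑ e ∈ Ω, slopeFn u k e t := by
    filter_upwards [hevAll, self_mem_nhdsWithin] with t hAll ht
    have ht0 : (t:ℝ) ≠ 0 := ne_of_gt ht
    rw [Finset.sum_congr rfl hAll]
    rw [Finset.sum_sub_distrib]
    field_simp
    rw [← Finset.mul_sum]
    ring
  refine Filter.Tendsto.congr' (Filter.EventuallyEq.symm hquot) ?_
  have : Filter.Tendsto (fun t : ℝ => ∑ e ∈ Ω, slopeFn u k e t)
      (nhdsWithin (0:ℝ) (Set.Ioi 0)) (nhds (∑ e ∈ Ω, slopeFn u k e 0)) := by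
    refine tendsto_finset_sum _ (fun e _ => ?_)
    unfold slopeFn
    split
    · exact Filter.tendsto_id.mono_left nhdsWithin_le_nhds
    · split
      · exact tendsto_const_nhds
      · split
        · exact tendsto_const_nhds
        · exact tendsto_const_nhds
  exact this.neg

/-- For the noiseless symmetric objective `f(u) = Σ_{(i,j)∈Ω} |u_i u_j − u*_i u*_j|`
over `u ≥ 0`, if `G(Ω)` is connected and non-bipartite and `u* > 0`, then every
D-min-stationary point `u` is entrywise strictly positive or identically zero. -/
theorem stmt_13 {n : ℕ} (ustar : Fin n → ℝ) (hpos : ∀ i, 0 < ustar i)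
    (Ω : Finset (Fin n × Fin n))
    (hconn : (graphOf Ω).Connected)
    (hnonbip : ¬ ∃ V₁ V₂ : Set (Fin n), V₁ ∪ V₂ = Set.univ ∧ Disjoint V₁ V₂ ∧
        ∀ i j, (i, j) ∈ Ω → ¬(i ∈ V₁ ∧ j ∈ V₁) ∧ ¬(i ∈ V₂ ∧ j ∈ V₂))
    (u : Fin n → ℝ) (hu : ∀ i, 0 ≤ u i)
    (hstat : ∀ d : Fin n → ℝ, (∀ i, u i = 0 → 0 ≤ d i) → ∀ L,
      dirDerivIs (fun v => ∑ e ∈ Ω, |v e.1 * v e.2 - ustar e.1 * ustar e.2|) u d L →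
      0 ≤ L) :
    (∀ i, 0 < u i) ∨ u = 0 := by
  classical
  by_cases hall : ∀ i, 0 < u i
  · exact Or.inl hall
  right
  push_neg at hall
  obtain ⟨k0, hk0le⟩ := hall
  have hk0 : u k0 = 0 := le_antisymm hk0le (hu k0)
  -- no zero vertex is adjacent to a positive vertex
  have key2 : ∀ a b, (graphOf Ω).Adj a b → u b = 0 → u a = 0 := by
    intro a b hab hb
    by_contra ha
    have hapos : 0 < u a := lt_of_le_of_ne (hu a) (Ne.symm ha)
    obtain ⟨hne, hmem⟩ := hab
    have hfeas : ∀ i, u i = 0 → (0:ℝ) ≤ (Pi.single b 1 : Fin n → ℝ) i := by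
      intro i _
      by_cases h : i = b <;> simp [Pi.single_apply, h]
    have hL := hstat (Pi.single b 1) hfeas _
      (key_deriv ustar hpos Ω u b hb)
    have hA : 0 < ∑ e ∈ Ω, slopeFn u b e 0 := by
      have hnn : ∀ e ∈ Ω, (0:ℝ) ≤ slopeFn u b e 0 := by
        intro e _
        unfold slopeFn
        split
        · exact le_refl 0
        · split
          · exact hu _
          · split
            · exact hu _
            · exact le_refl 0
      rcases hmem with hm | hm
      · refine Finset.sum_pos' hnn ⟨(a, b), hm, ?_⟩
        simpa [slopeFn, hne, hne.symm] using hapos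
      · refine Finset.sum_pos' hnn ⟨(b, a), hm, ?_⟩
        simpa [slopeFn, hne, hne.symm] using hapos
    linarith
  -- propagate zero across the connected graph
  have prop : ∀ x y : Fin n, (graphOf Ω).Reachable x y → u y = 0 → u x = 0 := by
    intro x y hxy
    obtain ⟨p⟩ := hxy
    induction p with
    | nil => exact id
    | cons h p ih => intro hy; exact key2 _ _ h (ih hy)
  funext i
  exact prop i k0 (hconn.preconnected i k0) hk0
end

section
/- Suppose u* > 0, G(Ω) has no bipartite component, and u > 0 is a D-stationary point of f(u) = Σ_{(i,j)∈Ω} |u_i u_j − u*_i u*_j|. Then for every i, min_{k∈Ω_i} (u*_k/u_k) ≤ u_i/u*_i ≤ max_{k∈Ω_i} (u*_k/u_k), where Ω_i = {j : (i,j) ∈ Ω}. -/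
/-- A point is directional-stationary if all existing one-sided directional derivatives
are nonnegative, or all are nonpositive. -/
def DStationary {n : ℕ} (f : (Fin n → ℝ) → ℝ) (u : Fin n → ℝ) : Prop :=
  (∀ d L, dirDerivIs f u d L → 0 ≤ L) ∨ (∀ d L, dirDerivIs f u d L → L ≤ 0)

/-- The neighbor set `Ω_i = {j : (i,j) ∈ Ω}`. -/
def nbr {n : ℕ} (Ω : Finset (Fin n × Fin n)) (i : Fin n) : Finset (Fin n) :=
  (Ω.filter fun e => e.1 = i).image Prod.snd

section Helpers
open Filter
lemma lim_pos (g A B : ℝ) (hg : 0 < g) :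
    Tendsto (fun t : ℝ => (|g + t*A + t^2*B| - |g|)/t) (nhdsWithin 0 (Set.Ioi 0)) (nhds A) := by
  have hcont : Tendsto (fun t : ℝ => g + t*A + t^2*B) (nhds 0) (nhds g) := by
    have := (Continuous.tendsto (by continuity : Continuous fun t : ℝ => g + t*A + t^2*B) 0)
    simpa using this
  have h1 : ∀ᶠ t : ℝ in nhds 0, 0 < g + t*A + t^2*B := hcont.eventually (eventually_gt_nhds hg)
  have hev : ∀ᶠ t in nhdsWithin 0 (Set.Ioi 0),
      A + t*B = (|g + t*A + t^2*B| - |g|)/t := by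
    filter_upwards [eventually_nhdsWithin_of_eventually_nhds h1, self_mem_nhdsWithin]
      with t ht1 ht2
    have ht : (t:ℝ) ≠ 0 := ne_of_gt ht2
    rw [abs_of_pos ht1, abs_of_pos hg]
    field_simp
    ring
  have hlim : Tendsto (fun t : ℝ => A + t*B) (nhdsWithin 0 (Set.Ioi 0)) (nhds A) := by
    have : Tendsto (fun t : ℝ => A + t*B) (nhds 0) (nhds A) := by
      have := (Continuous.tendsto (by continuity : Continuous fun t : ℝ => A + t*B) 0)
      simpa using this
    exact this.mono_left nhdsWithin_le_nhds
  exact hlim.congr' hev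

lemma lim_neg (g A B : ℝ) (hg : g < 0) :
    Tendsto (fun t : ℝ => (|g + t*A + t^2*B| - |g|)/t) (nhdsWithin 0 (Set.Ioi 0)) (nhds (-A)) := by
  have := lim_pos (-g) (-A) (-B) (by linarith)
  have heq : ∀ t : ℝ, (|(-g) + t*(-A) + t^2*(-B)| - |(-g)|)/t
      = (|g + t*A + t^2*B| - |g|)/t := by
    intro t
    rw [show (-g) + t*(-A) + t^2*(-B) = -(g + t*A + t^2*B) by ring, abs_neg, abs_neg]
  exact this.congr (fun t => heq t)

lemma lim_zero (B : ℝ) :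
    Tendsto (fun t : ℝ => (|(0:ℝ) + t*0 + t^2*B| - |(0:ℝ)|)/t) (nhdsWithin 0 (Set.Ioi 0)) (nhds 0) := by
  have hev : ∀ᶠ t in nhdsWithin (0:ℝ) (Set.Ioi 0),
      t * |B| = (|(0:ℝ) + t*0 + t^2*B| - |(0:ℝ)|)/t := by
    filter_upwards [self_mem_nhdsWithin] with t ht
    have ht' : (t:ℝ) ≠ 0 := ne_of_gt ht
    rw [show (0:ℝ) + t*0 + t^2*B = t^2*B by ring, abs_mul, abs_zero, abs_sq]
    rw [show t^2 = t*t by ring]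
    field_simp
    ring
  have hlim : Tendsto (fun t : ℝ => t * |B|) (nhdsWithin (0:ℝ) (Set.Ioi 0)) (nhds 0) := by
    have : Tendsto (fun t : ℝ => t * |B|) (nhds 0) (nhds 0) := by
      have := (Continuous.tendsto (by continuity : Continuous fun t : ℝ => t * |B|) 0)
      simpa using this
    exact this.mono_left nhdsWithin_le_nhds
  exact hlim.congr' hev

lemma key_edges {n : ℕ} (ustar u : Fin n → ℝ)
    (hus : ∀ i, 0 < ustar i) (hu : ∀ i, 0 < u i)
    (Ω : Finset (Fin n × Fin n))
    (hstat : DStationary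
      (fun v => ∑ e ∈ Ω, |v e.1 * v e.2 - ustar e.1 * ustar e.2|) u) :
    ∀ e ∈ Ω, u e.1 * u e.2 = ustar e.1 * ustar e.2 := by
  set d : Fin n → ℝ := fun v => Real.log (ustar v / u v) * u v with hd
  set ℓ : Fin n × Fin n → ℝ := fun e =>
    -(|Real.log ((ustar e.1 * ustar e.2) / (u e.1 * u e.2))| * (u e.1 * u e.2)) with hℓ
  have hedge : ∀ e : Fin n × Fin n,
      Tendsto (fun t : ℝ =>
        (|(u e.1 + t * d e.1) * (u e.2 + t * d e.2) - ustar e.1 * ustar e.2|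
          - |u e.1 * u e.2 - ustar e.1 * ustar e.2|) / t)
        (nhdsWithin 0 (Set.Ioi 0)) (nhds (ℓ e)) ∧
      Tendsto (fun t : ℝ =>
        (|(u e.1 + t * (-d e.1)) * (u e.2 + t * (-d e.2)) - ustar e.1 * ustar e.2|
          - |u e.1 * u e.2 - ustar e.1 * ustar e.2|) / t)
        (nhdsWithin 0 (Set.Ioi 0)) (nhds (-ℓ e)) := by
    intro e
    set w : ℝ := u e.1 * u e.2 with hw
    set s : ℝ := ustar e.1 * ustar e.2 with hs
    have hw0 : 0 < w := mul_pos (hu e.1) (hu e.2)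
    have hs0 : 0 < s := mul_pos (hus e.1) (hus e.2)
    set A : ℝ := d e.1 * u e.2 + d e.2 * u e.1 with hA
    set B : ℝ := d e.1 * d e.2 with hB
    have hAval : A = Real.log (s / w) * w := by
      have h1 : Real.log (ustar e.1 / u e.1) + Real.log (ustar e.2 / u e.2)
          = Real.log (s / w) := by
        rw [← Real.log_mul (ne_of_gt (div_pos (hus e.1) (hu e.1)))
          (ne_of_gt (div_pos (hus e.2) (hu e.2)))]
        congr 1
        rw [hs, hw, div_mul_div_comm]
      rw [hA, hd]
      simp only
      rw [← h1, hw]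
      ring
    have hform : ∀ t : ℝ, (u e.1 + t * d e.1) * (u e.2 + t * d e.2) - s
        = (w - s) + t * A + t^2 * B := by
      intro t; rw [hw, hA, hB]; ring
    have hform' : ∀ t : ℝ, (u e.1 + t * (-d e.1)) * (u e.2 + t * (-d e.2)) - s
        = (w - s) + t * (-A) + t^2 * B := by
      intro t; rw [hw, hA, hB]; ring
    have hℓdef : ℓ e = -(|Real.log (s / w)| * w) := by rw [hℓ]
    rcases lt_trichotomy w s with hlt | heq | hgt
    · have hlog : 0 < Real.log (s / w) := Real.log_pos ((one_lt_div hw0).mpr hlt)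
      have hℓe : ℓ e = -(Real.log (s / w) * w) := by rw [hℓdef, abs_of_pos hlog]
      constructor
      · have := lim_neg (w - s) A B (by linarith)
        have hval : -A = ℓ e := by rw [hAval, hℓe]
        rw [← hval]
        exact this.congr (by intro t; rw [hform t])
      · have := lim_neg (w - s) (-A) B (by linarith)
        rw [neg_neg] at this
        have hval : A = -ℓ e := by rw [hAval, hℓe, neg_neg]
        rw [← hval]
        exact this.congr (by intro t; rw [hform' t])
    · have hA0 : A = 0 := by
        rw [hAval, ← heq, div_self (ne_of_gt hw0), Real.log_one, zero_mul]
      have hℓe : ℓ e = 0 := by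
        rw [hℓdef, ← heq, div_self (ne_of_gt hw0), Real.log_one, abs_zero, zero_mul, neg_zero]
      constructor
      · rw [hℓe]
        refine (lim_zero B).congr fun t => ?_
        rw [hform t, hA0, heq, sub_self]
      · rw [hℓe, neg_zero]
        refine (lim_zero B).congr fun t => ?_
        rw [hform' t, hA0, heq, sub_self, neg_zero]
    · have hlog : Real.log (s / w) < 0 :=
        Real.log_neg (div_pos hs0 hw0) ((div_lt_one hw0).mpr hgt)
      have hℓe : ℓ e = Real.log (s / w) * w := by rw [hℓdef, abs_of_neg hlog, neg_mul, neg_neg]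
      constructor
      · have := lim_pos (w - s) A B (by linarith)
        have hval : A = ℓ e := by rw [hAval, hℓe]
        rw [← hval]
        exact this.congr (by intro t; rw [hform t])
      · have := lim_pos (w - s) (-A) B (by linarith)
        have hval : -A = -ℓ e := by rw [hAval, hℓe]
        rw [← hval]
        exact this.congr (by intro t; rw [hform' t])
  -- assemble directional derivatives of the sum
  have hsum1 : dirDerivIs
      (fun v => ∑ e ∈ Ω, |v e.1 * v e.2 - ustar e.1 * ustar e.2|) u d
      (∑ e ∈ Ω, ℓ e) := by
    unfold dirDerivIs
    have h1 := tendsto_finset_sum Ω (fun e _ => (hedge e).1)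
    refine h1.congr fun t => ?_
    simp only [Pi.add_apply, Pi.smul_apply, smul_eq_mul]
    rw [← Finset.sum_div, ← Finset.sum_sub_distrib]
  have hsum2 : dirDerivIs
      (fun v => ∑ e ∈ Ω, |v e.1 * v e.2 - ustar e.1 * ustar e.2|) u (-d)
      (-∑ e ∈ Ω, ℓ e) := by
    unfold dirDerivIs
    have h1 := tendsto_finset_sum Ω (fun e _ => (hedge e).2)
    rw [Finset.sum_neg_distrib] at h1
    refine h1.congr fun t => ?_
    simp only [Pi.add_apply, Pi.smul_apply, smul_eq_mul, Pi.neg_apply]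
    rw [← Finset.sum_div, ← Finset.sum_sub_distrib]
  have hnonpos : ∀ e ∈ Ω, ℓ e ≤ 0 := by
    intro e _
    rw [hℓ]
    simp only
    exact neg_nonpos.mpr (mul_nonneg (abs_nonneg _)
      (le_of_lt (mul_pos (hu e.1) (hu e.2))))
  have hzero : ∀ e ∈ Ω, ℓ e = 0 := by
    have hge : 0 ≤ ∑ e ∈ Ω, ℓ e := by
      rcases hstat with h | h
      · exact h d _ hsum1
      · have := h (-d) _ hsum2
        linarith
    have hle : ∑ e ∈ Ω, ℓ e ≤ 0 := Finset.sum_nonpos hnonpos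
    have : ∑ e ∈ Ω, ℓ e = 0 := le_antisymm hle hge
    exact (Finset.sum_eq_zero_iff_of_nonpos hnonpos).mp this
  intro e he
  have h0 := hzero e he
  rw [hℓ] at h0
  simp only at h0
  have hw0 : (0:ℝ) < u e.1 * u e.2 := mul_pos (hu e.1) (hu e.2)
  have hs0 : (0:ℝ) < ustar e.1 * ustar e.2 := mul_pos (hus e.1) (hus e.2)
  have habs : |Real.log ((ustar e.1 * ustar e.2) / (u e.1 * u e.2))| = 0 := by
    have := neg_eq_zero.mp h0
    rcases mul_eq_zero.mp this with h | h
    · exact h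
    · exact absurd h (ne_of_gt hw0)
  have hlog0 : Real.log ((ustar e.1 * ustar e.2) / (u e.1 * u e.2)) = 0 := abs_eq_zero.mp habs
  have hdiv : (ustar e.1 * ustar e.2) / (u e.1 * u e.2) = 1 := by
    rcases Real.log_eq_zero.mp hlog0 with h | h | h
    · exact absurd h (ne_of_gt (div_pos hs0 hw0))
    · exact h
    · linarith [div_pos hs0 hw0]
  have := (div_eq_one_iff_eq (ne_of_gt hw0)).mp hdiv
  linarith

end Helpers

/-- If `u* > 0`, `G(Ω)` has no bipartite component, and `u > 0` is D-stationary for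
`f(u) = Σ_{(i,j)∈Ω} |u_i u_j − u*_i u*_j|`, then for every `i`,
`min_{k∈Ω_i} u*_k/u_k ≤ u_i/u*_i ≤ max_{k∈Ω_i} u*_k/u_k`. -/
theorem stmt_14 {n : ℕ} (ustar u : Fin n → ℝ)
    (hus : ∀ i, 0 < ustar i) (hu : ∀ i, 0 < u i)
    (Ω : Finset (Fin n × Fin n))
    (hne : ∀ i, (nbr Ω i).Nonempty)
    (hnobip : ¬ ∃ (c : (graphOf Ω).ConnectedComponent) (V₁ V₂ : Set (Fin n)),
        V₁ ∪ V₂ = c.supp ∧ Disjoint V₁ V₂ ∧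
        ∀ i j, (i, j) ∈ Ω → ¬(i ∈ V₁ ∧ j ∈ V₁) ∧ ¬(i ∈ V₂ ∧ j ∈ V₂))
    (hstat : DStationary
      (fun v => ∑ e ∈ Ω, |v e.1 * v e.2 - ustar e.1 * ustar e.2|) u) :
    ∀ i,
      ((nbr Ω i).image fun k => ustar k / u k).min' ((hne i).image _) ≤ u i / ustar i ∧
      u i / ustar i ≤ ((nbr Ω i).image fun k => ustar k / u k).max' ((hne i).image _) := by
  intro i
  obtain ⟨k, hk⟩ := hne i
  have hk' := hk
  simp only [nbr, Finset.mem_image, Finset.mem_filter] at hk'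
  obtain ⟨a, ⟨haΩ, ha1⟩, ha2⟩ := hk'
  have hkey := key_edges ustar u hus hu Ω hstat a haΩ
  rw [ha1, ha2] at hkey
  have hval : ustar k / u k = u i / ustar i := by
    rw [div_eq_div_iff (ne_of_gt (hu k)) (ne_of_gt (hus i))]
    linear_combination -hkey
  have hmem : ustar k / u k ∈ (nbr Ω i).image fun k => ustar k / u k :=
    Finset.mem_image_of_mem _ hk
  rw [← hval]
  exact ⟨Finset.min'_le _ _ hmem, Finset.le_max' _ _ hmem⟩
end

section
/- Let h₁,…,h_m : X → R be continuous, locally Lipschitz functions at x̄ in a convex set X, let h(x) = max_i h_i(x), and let I(x̄) = {i : h_i(x̄) = h(x̄)}. Then for every feasible direction d, the Clarke generalized directional derivative satisfies h°(x̄, d) ≤ max_{i∈I(x̄)} h_i°(x̄, d). -/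
open Filter Metric Set Topology


/-- The Clarke generalized directional derivative of `h` at `x` in direction `d`:
`h°(x,d) = limsup_{y→x, t↓0} (h(y+td) − h(y))/t`. -/
noncomputable def clarkeDD {E : Type*} [NormedAddCommGroup E] [NormedSpace ℝ E]
    (h : E → ℝ) (x d : E) : ℝ :=
  Filter.limsup (fun q : E × ℝ => (h (q.1 + q.2 • d) - h q.1) / q.2)
    ((nhds x) ×ˢ (nhdsWithin 0 (Set.Ioi 0)))

lemma exists_eq_ciSup_fin {n : ℕ} (f : Fin (n+1) → ℝ) : ∃ j, (⨆ k, f k) = f j := by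
  obtain ⟨j, hj⟩ := Finite.exists_max f
  exact ⟨j, le_antisymm (ciSup_le hj) (le_ciSup (Set.Finite.bddAbove (Set.finite_range f)) j)⟩

/-- For continuous, locally Lipschitz functions `h₁,…,h_m` on a convex set `X` and
`h = max_i h_i`, the Clarke directional derivative at `x̄ ∈ X` in any feasible
direction `d` is at most the largest Clarke directional derivative of an active
function: there is an active index `i ∈ I(x̄)` with `h°(x̄,d) ≤ h_i°(x̄,d)`. -/
theorem stmt_16 {E : Type*} [NormedAddCommGroup E] [NormedSpace ℝ E]
    {m : ℕ} (X : Set E) (hX : Convex ℝ X) (x : E) (hx : x ∈ X)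
    (h : Fin (m + 1) → E → ℝ)
    (hcont : ∀ i, ContinuousOn (h i) X)
    (hlip : ∀ i, ∃ (K : NNReal) (ε : ℝ), 0 < ε ∧
      LipschitzOnWith K (h i) (Metric.ball x ε))
    (d : E) (hd : x + d ∈ X) :
    ∃ i : Fin (m + 1), h i x = (⨆ j, h j x) ∧
      clarkeDD (fun y => ⨆ j, h j y) x d ≤ clarkeDD (h i) x d := by
  classical
  choose K ε hεpos hlip' using hlip
  set F : Filter (E × ℝ) := (nhds x) ×ˢ (nhdsWithin 0 (Set.Ioi 0)) with hF
  haveI : F.NeBot := Filter.prod_neBot.mpr ⟨inferInstance, inferInstance⟩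
  -- uniform constants
  set ε0 : ℝ := Finset.univ.inf' Finset.univ_nonempty ε with hε0def
  have hε0 : 0 < ε0 := by
    rw [hε0def, Finset.lt_inf'_iff]; exact fun i _ => hεpos i
  set K' : NNReal := Finset.univ.sup K with hK'def
  have hKle : ∀ i, K i ≤ K' := fun i => Finset.le_sup (Finset.mem_univ i)
  have hdist : ∀ i, ∀ {u v : E}, u ∈ ball x ε0 → v ∈ ball x ε0 →
      |h i u - h i v| ≤ (K' : ℝ) * ‖u - v‖ := by
    intro i u v hu hv
    have h1 : ε0 ≤ ε i := Finset.inf'_le _ (Finset.mem_univ i)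
    have h2 := ((hlip' i).mono (ball_subset_ball h1)).dist_le_mul u hu v hv
    rw [Real.dist_eq, dist_eq_norm] at h2
    calc |h i u - h i v| ≤ (K i : ℝ) * ‖u - v‖ := h2
      _ ≤ (K' : ℝ) * ‖u - v‖ := by gcongr; exact_mod_cast hKle i
  set M : ℝ := (K' : ℝ) * ‖d‖ with hM
  -- active set
  set A : Set (Fin (m+1)) := {i | h i x = ⨆ j, h j x} with hA
  obtain ⟨i₀, hi₀⟩ := exists_eq_ciSup_fin (fun i => h i x)
  have hi₀A : i₀ ∈ A := hi₀.symm
  set sA : Finset (Fin (m+1)) := Finset.univ.filter (· ∈ A) with hsA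
  have hsAne : sA.Nonempty := ⟨i₀, by simp [hsA, hi₀A]⟩
  obtain ⟨i₁, hi₁mem, hi₁max⟩ := Finset.exists_max_image sA (fun i => clarkeDD (h i) x d) hsAne
  have hi₁A : i₁ ∈ A := by simpa [hsA] using hi₁mem
  refine ⟨i₁, hi₁A, ?_⟩
  set C : ℝ := clarkeDD (h i₁) x d with hC
  have hcontAt : ∀ i, ContinuousAt (h i) x :=
    fun i => ((hlip' i).continuousOn).continuousAt (ball_mem_nhds x (hεpos i))
  -- good neighborhood
  have hW : ∀ᶠ z in 𝓝 x, z ∈ ball x ε0 ∧ ∀ i, i ∉ A → h i z < h i₀ z := by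
    have hb : ∀ᶠ z in 𝓝 x, z ∈ ball x ε0 := ball_mem_nhds x hε0
    refine hb.and ?_
    rw [eventually_all]
    intro i
    by_cases hiA : i ∈ A
    · exact Eventually.of_forall fun z hz => absurd hiA hz
    · have hlt : h i x < h i₀ x := by
        rw [← hi₀]
        exact lt_of_le_of_ne
          (le_ciSup (Set.Finite.bddAbove (Set.finite_range fun j => h j x)) i) hiA
      exact ((hcontAt i).eventually_lt (hcontAt i₀) hlt).mono fun z hz _ => hz
  -- transfer to product filter
  have hfst : Tendsto (fun q : E × ℝ => q.1) F (𝓝 x) := tendsto_fst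
  have hsnd : Tendsto (fun q : E × ℝ => q.2) F (𝓝[>] (0:ℝ)) := tendsto_snd
  have hmap : Tendsto (fun q : E × ℝ => q.1 + q.2 • d) F (𝓝 x) := by
    have h2 : Tendsto (fun q : E × ℝ => q.2) F (𝓝 (0:ℝ)) := hsnd.mono_right nhdsWithin_le_nhds
    have h3 := hfst.add (h2.smul_const d)
    simpa using h3
  have hev : ∀ᶠ q : E × ℝ in F,
      (q.1 ∈ ball x ε0 ∧ ∀ i, i ∉ A → h i q.1 < h i₀ q.1) ∧
      (q.1 + q.2 • d ∈ ball x ε0 ∧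
        ∀ i, i ∉ A → h i (q.1 + q.2 • d) < h i₀ (q.1 + q.2 • d)) ∧
      0 < q.2 :=
    (hfst.eventually hW).and ((hmap.eventually hW).and
      (hsnd.eventually (eventually_mem_nhdsWithin.mono fun t ht => ht)))
  have hBdd : ∀ z, BddAbove (Set.range fun k => h k z) :=
    fun z => Set.Finite.bddAbove (Set.finite_range _)
  -- quotient bounds
  have hquot : ∀ i, ∀ᶠ q : E × ℝ in F, |(h i (q.1 + q.2 • d) - h i q.1) / q.2| ≤ M := by
    intro i
    refine hev.mono ?_
    rintro ⟨y, t⟩ ⟨⟨hy, -⟩, ⟨hyt, -⟩, ht⟩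
    have hnorm : ‖(y + t • d) - y‖ = t * ‖d‖ := by
      simp [norm_smul, abs_of_pos ht]
    have h2 := hdist i hyt hy
    rw [hnorm] at h2
    rw [abs_div, abs_of_pos ht, div_le_iff₀ ht]
    calc |h i (y + t • d) - h i y| ≤ (K' : ℝ) * (t * ‖d‖) := h2
      _ = M * t := by rw [hM]; ring
  have hquotmax : ∀ᶠ q : E × ℝ in F,
      |((⨆ j, h j (q.1 + q.2 • d)) - ⨆ j, h j q.1) / q.2| ≤ M := by
    refine hev.mono ?_
    rintro ⟨y, t⟩ ⟨⟨hy, -⟩, ⟨hyt, -⟩, ht⟩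
    obtain ⟨j₁, hj₁⟩ := exists_eq_ciSup_fin (fun j => h j (y + t • d))
    obtain ⟨j₂, hj₂⟩ := exists_eq_ciSup_fin (fun j => h j y)
    have hnorm : ‖(y + t • d) - y‖ = t * ‖d‖ := by
      simp [norm_smul, abs_of_pos ht]
    have hMt : M * t = (K' : ℝ) * (t * ‖d‖) := by rw [hM]; ring
    rw [abs_div, abs_of_pos ht, div_le_iff₀ ht, abs_le]
    constructor
    · have f0 := hdist j₂ hyt hy
      rw [hnorm] at f0
      have f1 := abs_le.1 f0
      have f2 : h j₂ (y + t • d) ≤ ⨆ k, h k (y + t • d) := le_ciSup (hBdd _) j₂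
      -- noop
      linarith [f1.1, f1.2]
    · have f0 := hdist j₁ hyt hy
      rw [hnorm] at f0
      have f1 := abs_le.1 f0
      have f2 : h j₁ y ≤ ⨆ k, h k y := le_ciSup (hBdd _) j₁
      -- noop
      linarith [f1.1, f1.2]
  have hcob : IsCoboundedUnder (· ≤ ·) F
      (fun q : E × ℝ => ((⨆ j, h j (q.1 + q.2 • d)) - ⨆ j, h j q.1) / q.2) :=
    isCoboundedUnder_le_of_eventually_le F (hquotmax.mono fun q hq => (abs_le.1 hq).1)
  have hbdd : ∀ i, IsBoundedUnder (· ≤ ·) F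
      (fun q : E × ℝ => (h i (q.1 + q.2 • d) - h i q.1) / q.2) := fun i =>
    isBoundedUnder_of_eventually_le ((hquot i).mono fun q hq => (abs_le.1 hq).2)
  -- main estimate
  have main : ∀ εp : ℝ, 0 < εp → clarkeDD (fun y => ⨆ j, h j y) x d ≤ C + εp := by
    intro εp hεp
    have hlt : ∀ᶠ q : E × ℝ in F, ∀ j, j ∈ A →
        (h j (q.1 + q.2 • d) - h j q.1) / q.2 < C + εp := by
      rw [eventually_all]
      intro j
      by_cases hjA : j ∈ A
      · have h1 : clarkeDD (h j) x d ≤ C := hi₁max j (by simp [hsA, hjA])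
        have h2 : Filter.limsup
            (fun q : E × ℝ => (h j (q.1 + q.2 • d) - h j q.1) / q.2) F < C + εp :=
          lt_of_le_of_lt h1 (lt_add_of_pos_right _ hεp)
        exact (eventually_lt_of_limsup_lt h2 (hbdd j)).mono fun q hq _ => hq
      · exact Eventually.of_forall fun q hj => absurd hj hjA
    refine limsup_le_of_le hcob ?_
    filter_upwards [hev, hlt]
    rintro ⟨y, t⟩ ⟨⟨hy, hyact⟩, ⟨hyt, hytact⟩, ht⟩ hltq
    obtain ⟨j₁, hj₁⟩ := exists_eq_ciSup_fin (fun j => h j (y + t • d))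
    have hj₁A : j₁ ∈ A := by
      by_contra hjA
      have h2 : h i₀ (y + t • d) ≤ ⨆ k, h k (y + t • d) := le_ciSup (hBdd _) i₀
      -- noop
      rw [hj₁] at h2
      exact absurd (lt_of_lt_of_le (hytact j₁ hjA) h2) (lt_irrefl _)
    have hb2 : h j₁ y ≤ ⨆ k, h k y := le_ciSup (hBdd _) j₁
    have hkey : ((⨆ j, h j (y + t • d)) - ⨆ j, h j y) / t
        ≤ (h j₁ (y + t • d) - h j₁ y) / t := by
      refine div_le_div_of_nonneg_right ?_ ht.le
      -- noop
      linarith [hb2, hj₁.le, hj₁.ge]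
    exact hkey.trans (le_of_lt (hltq j₁ hj₁A))
  exact le_of_forall_pos_le_add main
end
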